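/- Let 𝒢 be an e-graph, G its converted circuit, and φ a minimal satisfying extraction of 𝒢. Then the evaluation α_φ is a minimal satisfying evaluation of G: it is a valid evaluation, α_φ(∨_C) = 1 for all C ∈ 𝒞_out, and for every proper subset A ⊊ {i : α_φ(i) = 1}, the function α_φ|_A (equal to α_φ on A and 0 elsewhere) is not a valid evaluation of G satisfying all outputs. -/
import Mathlib


/-- Gate types for a monotone circuit. -/
inductive Gate where
  | AND : Gate
  | OR : Gate
deriving DecidableEq

/-- A weighted cyclic monotone circuit: a directed graph with a set of outputs,
a gate-type function, and a cost function (costs are only meaningful on inputs). -/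
structure Circuit (V : Type) where
  edge : V → V → Prop
  isOut : V → Prop
  gate : V → Gate
  cost : V → ℝ

namespace Circuit

variable {V : Type}

/-- The inputs are the vertices of in-degree 0. -/
def IsInput (G : Circuit V) (u : V) : Prop := ∀ v, ¬ G.edge v u

/-- A valid evaluation: each non-input gate evaluates to its gate function applied to
the values of its in-neighbors. -/
def Valid (G : Circuit V) (α : V → Bool) : Prop :=
  ∀ u : V, ¬ G.IsInput u →
    (α u = true ↔
      match G.gate u with
      | Gate.AND => ∀ v, G.edge v u → α v = true
      | Gate.OR => ∃ v, G.edge v u ∧ α v = true)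

/-- An evaluation satisfies the circuit if it is 1 on all outputs. -/
def Satisfies (G : Circuit V) (α : V → Bool) : Prop :=
  ∀ u, G.isOut u → α u = true

/-- The restriction `α|_A`: equal to `α` on `A` and `0` (false) elsewhere. -/
noncomputable def restrict (α : V → Bool) (A : Set V) : V → Bool :=
  fun u => @ite _ (u ∈ A) (Classical.propDecidable _) (α u) false

/-- A minimal satisfying evaluation: valid, satisfying, and no restriction of its
true set to a proper subset is a valid satisfying evaluation. -/
def MinSat (G : Circuit V) (α : V → Bool) : Prop :=
  G.Valid α ∧ G.Satisfies α ∧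
    ∀ A : Set V, A ⊂ {u | α u = true} →
      ¬ (G.Valid (restrict α A) ∧ G.Satisfies (restrict α A))

/-- `α` is acyclic if the subgraph `G[α]` induced by the true vertices has no
directed cycle. -/
def EvalAcyclic (G : Circuit V) (α : V → Bool) : Prop :=
  ∀ u, ¬ Relation.TransGen (fun a b => G.edge a b ∧ α a = true ∧ α b = true) u u

end Circuit

/-- An e-graph: a finite set `N` of e-nodes partitioned into e-classes (indexed by the
type `C`, via the surjective class map `cls`), a dependency relation `edge ⊆ N × C`,
a set of output classes, and a cost function. -/
structure EGraph (N C : Type) where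
  cls : N → C
  surj : Function.Surjective cls
  edge : N → C → Prop
  isOut : C → Prop
  cost : N → ℝ

namespace EGraph

variable {N C : Type}

/-- An extraction, modeled as a partial function `C → Option N`: a choice function
(on its domain) closed under dependencies. -/
def IsExtraction (𝒢 : EGraph N C) (φ : C → Option N) : Prop :=
  (∀ D u, φ D = some u → 𝒢.cls u = D) ∧
  (∀ D u D', φ D = some u → 𝒢.edge u D' → (φ D').isSome)

/-- A satisfying extraction: an extraction whose domain contains all output classes. -/
def SatExtraction (𝒢 : EGraph N C) (φ : C → Option N) : Prop :=
  𝒢.IsExtraction φ ∧ ∀ D, 𝒢.isOut D → (φ D).isSome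

/-- The restriction `φ|_𝒜` of an extraction to a set of classes. -/
noncomputable def restrictExt (φ : C → Option N) (𝒜 : Set C) : C → Option N :=
  fun D => @ite _ (D ∈ 𝒜) (Classical.propDecidable _) (φ D) none

/-- A minimally satisfying extraction: satisfying, and no restriction to a proper
subset of its domain is a satisfying extraction. -/
def MinSatExtraction (𝒢 : EGraph N C) (φ : C → Option N) : Prop :=
  𝒢.SatExtraction φ ∧
    ∀ 𝒜 : Set C, 𝒜 ⊂ {D | (φ D).isSome = true} →
      ¬ 𝒢.SatExtraction (restrictExt φ 𝒜)

/-- An extraction is acyclic if there is no (nontrivial) selected path from a class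
to itself. -/
def ExtAcyclic (𝒢 : EGraph N C) (φ : C → Option N) : Prop :=
  ∀ D, ¬ Relation.TransGen (fun D₁ D₂ => ∃ u, φ D₁ = some u ∧ 𝒢.edge u D₂) D D

/-- Vertices of the converted circuit: an input `x_u` and an AND gate `∧_u` for each
e-node `u`, and an OR gate `∨_D` for each e-class `D`. -/
inductive Vtx (N C : Type) where
  | x : N → Vtx N C
  | and : N → Vtx N C
  | or : C → Vtx N C

/-- The converted circuit of an e-graph: edges `(∧_u, ∨_D)` for `u ∈ D`,
`(∨_D, ∧_u)` for `(u, D) ∈ ℰ`, and `(x_u, ∧_u)`; outputs `∨_D` for output classes `D`;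
gate types AND on `∧_u`, OR on `∨_D`; cost `c(x_u) = c(u)`. -/
def conv (𝒢 : EGraph N C) : Circuit (Vtx N C) where
  edge a b :=
    match a, b with
    | .and u, .or D => 𝒢.cls u = D
    | .or D, .and u => 𝒢.edge u D
    | .x u, .and v => u = v
    | _, _ => False
  isOut a :=
    match a with
    | .or D => 𝒢.isOut D
    | _ => False
  gate a :=
    match a with
    | .or _ => Gate.OR
    | _ => Gate.AND
  cost a :=
    match a with
    | .x u => 𝒢.cost u
    | _ => 0

/-- The evaluation `α_φ` associated to an extraction `φ`:
`α_φ(x_u) = α_φ(∧_u) = 1` iff `φ(cls u) = u`, and `α_φ(∨_D) = 1` iff `D ∈ dom φ`. -/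
noncomputable def evalOf (𝒢 : EGraph N C) (φ : C → Option N) : Vtx N C → Bool :=
  fun a =>
    match a with
    | .x u => @decide (φ (𝒢.cls u) = some u) (Classical.propDecidable _)
    | .and u => @decide (φ (𝒢.cls u) = some u) (Classical.propDecidable _)
    | .or D => (φ D).isSome

/-- The extraction `φ_α` associated to an evaluation `α`:
`D ∈ dom φ_α` and `φ_α(D) = u` iff `u ∈ D` and `α(∧_u) = 1`. -/
noncomputable def extOf (𝒢 : EGraph N C) (α : Vtx N C → Bool) : C → Option N :=
  fun D =>
    @dite _ (∃ u, 𝒢.cls u = D ∧ α (Vtx.and u) = true) (Classical.propDecidable _)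
      (fun h => some h.choose) (fun _ => none)

end EGraph

/-- for a minimal satisfying extraction `φ` of an e-graph, the evaluation
`α_φ` is a minimal satisfying evaluation of the converted circuit: it is valid, it is 1
on all outputs, and no restriction of its true set to a proper subset is a valid
satisfying evaluation. -/
theorem stmt3 {N C : Type} [Fintype N] [Fintype C] (𝒢 : EGraph N C)
    (φ : C → Option N) (hφ : 𝒢.MinSatExtraction φ) :
    (𝒢.conv).MinSat (𝒢.evalOf φ) := by
  obtain ⟨⟨⟨hcls, hclosed⟩, hout⟩, hmin⟩ := hφ
  have heval_and : ∀ u : N, 𝒢.evalOf φ (EGraph.Vtx.and u) = true ↔ φ (𝒢.cls u) = some u := by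
    intro u; simp [EGraph.evalOf]
  have heval_x : ∀ u : N, 𝒢.evalOf φ (EGraph.Vtx.x u) = true ↔ φ (𝒢.cls u) = some u := by
    intro u; simp [EGraph.evalOf]
  have heval_or : ∀ D : C, 𝒢.evalOf φ (EGraph.Vtx.or D) = true ↔ (φ D).isSome := by
    intro D; simp [EGraph.evalOf]
  refine ⟨?_, ?_, ?_⟩
  · -- Valid
    intro u hu
    match u with
    | EGraph.Vtx.x u =>
      exact absurd (fun v => by cases v <;> exact fun h => h) hu
    | EGraph.Vtx.and u =>
      show 𝒢.evalOf φ (EGraph.Vtx.and u) = true ↔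
        ∀ v, (𝒢.conv).edge v (EGraph.Vtx.and u) → 𝒢.evalOf φ v = true
      constructor
      · intro h v hv
        match v, hv with
        | EGraph.Vtx.x w, hv =>
          cases hv; rwa [heval_x, ← heval_and]
        | EGraph.Vtx.or D, hv =>
          rw [heval_or]
          exact hclosed _ _ _ ((heval_and u).1 h) hv
      · intro h
        have hx := h (EGraph.Vtx.x u) rfl
        rwa [heval_x, ← heval_and] at hx
    | EGraph.Vtx.or D =>
      show 𝒢.evalOf φ (EGraph.Vtx.or D) = true ↔
        ∃ v, (𝒢.conv).edge v (EGraph.Vtx.or D) ∧ 𝒢.evalOf φ v = true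
      rw [heval_or]
      constructor
      · intro h
        obtain ⟨u, hu⟩ := Option.isSome_iff_exists.1 h
        have hc : 𝒢.cls u = D := hcls _ _ hu
        refine ⟨EGraph.Vtx.and u, hc, (heval_and u).2 ?_⟩
        rw [hc]; exact hu
      · rintro ⟨v, hv, hvt⟩
        match v, hv with
        | EGraph.Vtx.and u, hv =>
          have h2 := (heval_and u).1 hvt
          rw [hv] at h2
          exact Option.isSome_iff_exists.2 ⟨u, h2⟩
  · -- Satisfies
    intro v hv
    match v, hv with
    | EGraph.Vtx.or D, hv => exact (heval_or D).2 (hout D hv)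
  · -- minimality
    rintro A hA ⟨hval, hsat⟩
    set β := Circuit.restrict (𝒢.evalOf φ) A with hβ
    have hsubA : A ⊆ {v | 𝒢.evalOf φ v = true} := hA.1
    have hβA : ∀ v, β v = true ↔ v ∈ A := by
      intro v
      by_cases h : v ∈ A
      · simp only [hβ, Circuit.restrict, if_pos h]
        exact ⟨fun _ => h, fun _ => hsubA h⟩
      · simp only [hβ, Circuit.restrict, if_neg h]
        simp [h]
    have L3 : ∀ u : N, EGraph.Vtx.and u ∈ A → φ (𝒢.cls u) = some u := by
      intro u hu
      exact (heval_and u).1 (hsubA hu)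
    have L1 : ∀ u : N, EGraph.Vtx.and u ∈ A →
        (EGraph.Vtx.x u ∈ A ∧ ∀ D, 𝒢.edge u D → (EGraph.Vtx.or D : EGraph.Vtx N C) ∈ A) := by
      intro u hu
      have hni : ¬ (𝒢.conv).IsInput (EGraph.Vtx.and u) := by
        intro h; exact h (EGraph.Vtx.x u) rfl
      have hv := (hval (EGraph.Vtx.and u) hni).1 ((hβA _).2 hu)
      constructor
      · exact (hβA _).1 (hv (EGraph.Vtx.x u) rfl)
      · intro D hD
        exact (hβA _).1 (hv (EGraph.Vtx.or D) hD)
    have L2 : ∀ D : C, (EGraph.Vtx.or D : EGraph.Vtx N C) ∈ A →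
        ∃ u, 𝒢.cls u = D ∧ EGraph.Vtx.and u ∈ A := by
      intro D hD
      obtain ⟨w, hw⟩ := 𝒢.surj D
      have hni : ¬ (𝒢.conv).IsInput (EGraph.Vtx.or D) := by
        intro h; exact h (EGraph.Vtx.and w) hw
      have hv := (hval (EGraph.Vtx.or D) hni).1 ((hβA _).2 hD)
      obtain ⟨v, hv1, hv2⟩ := hv
      match v, hv1 with
      | EGraph.Vtx.and u, hv1 => exact ⟨u, hv1, (hβA _).1 hv2⟩
    set 𝒜 : Set C := {D | (EGraph.Vtx.or D : EGraph.Vtx N C) ∈ A} with h𝒜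
    have hψeq : ∀ D u, EGraph.restrictExt φ 𝒜 D = some u ↔ D ∈ 𝒜 ∧ φ D = some u := by
      intro D u
      by_cases h : D ∈ 𝒜
      · simp [EGraph.restrictExt, if_pos h, h]
      · simp [EGraph.restrictExt, if_neg h, h]
    have h𝒜dom : ∀ D, D ∈ 𝒜 → (φ D).isSome := by
      intro D hD
      exact (heval_or D).1 (hsubA hD)
    have hψsome : ∀ D, (EGraph.restrictExt φ 𝒜 D).isSome ↔ D ∈ 𝒜 := by
      intro D
      constructor
      · intro h
        obtain ⟨u, hu⟩ := Option.isSome_iff_exists.1 h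
        exact ((hψeq D u).1 hu).1
      · intro h
        obtain ⟨u, hu⟩ := Option.isSome_iff_exists.1 (h𝒜dom D h)
        exact Option.isSome_iff_exists.2 ⟨u, (hψeq D u).2 ⟨h, hu⟩⟩
    -- the restricted extraction is satisfying
    have hsatext : 𝒢.SatExtraction (EGraph.restrictExt φ 𝒜) := by
      refine ⟨⟨?_, ?_⟩, ?_⟩
      · intro D u hu
        exact hcls D u ((hψeq D u).1 hu).2
      · intro D u D' hu hedge
        obtain ⟨hD𝒜, hφD⟩ := (hψeq D u).1 hu
        obtain ⟨w, hw1, hw2⟩ := L2 D hD𝒜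
        have hφw : φ D = some w := by rw [← hw1]; exact L3 w hw2
        have huw : u = w := by
          have := hφD.symm.trans hφw
          exact Option.some.inj this
        subst huw
        have := (L1 u hw2).2 D' hedge
        exact (hψsome D').2 this
      · intro D hD
        have := hsat (EGraph.Vtx.or D) hD
        exact (hψsome D).2 ((hβA _).1 this)
    -- properness of 𝒜
    obtain ⟨v, hv1, hv2⟩ := Set.exists_of_ssubset hA
    have hkey : ∃ D₀, (φ D₀).isSome ∧ D₀ ∉ 𝒜 := by
      match v, hv1, hv2 with
      | EGraph.Vtx.or D, hv1, hv2 =>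
        exact ⟨D, (heval_or D).1 hv1, hv2⟩
      | EGraph.Vtx.and u, hv1, hv2 =>
        refine ⟨𝒢.cls u, Option.isSome_iff_exists.2 ⟨u, (heval_and u).1 hv1⟩, ?_⟩
        intro hmem
        obtain ⟨w, hw1, hw2⟩ := L2 _ hmem
        have hφw : φ (𝒢.cls u) = some w := by rw [← hw1]; exact L3 w hw2
        have : u = w := Option.some.inj (((heval_and u).1 hv1).symm.trans hφw)
        subst this
        exact hv2 hw2
      | EGraph.Vtx.x u, hv1, hv2 =>
        refine ⟨𝒢.cls u, Option.isSome_iff_exists.2 ⟨u, (heval_x u).1 hv1⟩, ?_⟩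
        intro hmem
        obtain ⟨w, hw1, hw2⟩ := L2 _ hmem
        have hφw : φ (𝒢.cls u) = some w := by rw [← hw1]; exact L3 w hw2
        have : u = w := Option.some.inj (((heval_x u).1 hv1).symm.trans hφw)
        subst this
        exact hv2 (L1 u hw2).1
    obtain ⟨D₀, hD₀1, hD₀2⟩ := hkey
    have hss : 𝒜 ⊂ {D | (φ D).isSome = true} := by
      constructor
      · intro D hD; exact h𝒜dom D hD
      · intro hcontra
        exact hD₀2 (hcontra hD₀1)
    exact hmin 𝒜 hss hsatext
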